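/- (Model construction for T_nD) Let P ⊆ 𝒫 be finite, p ∈ P, k ≥ 0, and δ ∈ D^P_k(T_nD). For every T_nD-model (M′,s′), if M′,s′ ⊨ δ^p, then there is a T_nD-model (M,s) such that M,s ⊨ δ and (M,s) ≅^col_p (M′,s′). -/

import Mathlib

/-!
Common framework: multi-agent epistemic modal logic with distributed knowledge.
Agents are `Fin n`, atoms are natural numbers.
-/

namespace DKLogic

/-- Formulas of the language `L_D`: atoms, negation, conjunction, disjunction and the
distributed-knowledge modality `D_B` for nonempty sets `B` of agents (together with the
constants `⊤`/`⊥`, which the paper uses as the empty conjunction/disjunction). -/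
inductive Formula (n : ℕ) : Type
  | top : Formula n
  | bot : Formula n
  | atom : ℕ → Formula n
  | neg : Formula n → Formula n
  | and : Formula n → Formula n → Formula n
  | or : Formula n → Formula n → Formula n
  | D : {B : Finset (Fin n) // B.Nonempty} → Formula n → Formula n

namespace Formula

/-- Modal depth of a formula. -/
def depth {n : ℕ} : Formula n → ℕ
  | top => 0
  | bot => 0
  | atom _ => 0
  | neg φ => depth φ
  | and φ ψ => max (depth φ) (depth ψ)
  | or φ ψ => max (depth φ) (depth ψ)
  | D _ φ => depth φ + 1

/-- The atoms occurring in a formula. -/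
def atoms {n : ℕ} : Formula n → Finset ℕ
  | top => ∅
  | bot => ∅
  | atom q => {q}
  | neg φ => atoms φ
  | and φ ψ => atoms φ ∪ atoms ψ
  | or φ ψ => atoms φ ∪ atoms ψ
  | D _ φ => atoms φ

end Formula

/-- A Kripke model over world type `W` with `n` agents. -/
structure KModel (n : ℕ) (W : Type) where
  R : Fin n → W → W → Prop
  V : W → Set ℕ

/-- The distributed accessibility relation `R_B = ⋂_{i ∈ B} R_i`. -/
def KModel.RB {n : ℕ} {W : Type} (M : KModel n W) (B : Finset (Fin n)) (s t : W) : Prop :=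
  ∀ i ∈ B, M.R i s t

/-- Satisfaction. -/
def Sat {n : ℕ} {W : Type} (M : KModel n W) : W → Formula n → Prop
  | _, .top => True
  | _, .bot => False
  | s, .atom q => q ∈ M.V s
  | s, .neg φ => ¬ Sat M s φ
  | s, .and φ ψ => Sat M s φ ∧ Sat M s ψ
  | s, .or φ ψ => Sat M s φ ∨ Sat M s ψ
  | s, .D B φ => ∀ t : W, M.RB B.1 s t → Sat M t φ

/-- Seriality of a relation. -/
def Serial {W : Type} (R : W → W → Prop) : Prop := ∀ x, ∃ y, R x y

/-- Euclideanness of a relation. -/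
def Euclidean {W : Type} (R : W → W → Prop) : Prop := ∀ x y z, R x y → R x z → R y z

/-- The six modal systems. -/
inductive MSys : Type
  | K | D | T | K45 | KD45 | S5

/-- `L`-models: frame conditions on each accessibility relation for each system. -/
def IsModel {n : ℕ} {W : Type} : MSys → KModel n W → Prop
  | .K, _ => True
  | .D, M => ∀ i, Serial (M.R i)
  | .T, M => ∀ i, Reflexive (M.R i)
  | .K45, M => ∀ i, Transitive (M.R i) ∧ Euclidean (M.R i)
  | .KD45, M => ∀ i, Serial (M.R i) ∧ Transitive (M.R i) ∧ Euclidean (M.R i)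
  | .S5, M => ∀ i, Reflexive (M.R i) ∧ Transitive (M.R i) ∧ Euclidean (M.R i)

/-- Semantic consequence over `L`-models. -/
def Entails {n : ℕ} (L : MSys) (φ ψ : Formula n) : Prop :=
  ∀ (W : Type) (M : KModel n W), IsModel L M → ∀ s : W, Sat M s φ → Sat M s ψ

/-- Semantic equivalence over `L`-models. -/
def EquivL {n : ℕ} (L : MSys) (φ ψ : Formula n) : Prop :=
  Entails L φ ψ ∧ Entails L ψ φ

/-- `L`-satisfiability. -/
def SatL {n : ℕ} (L : MSys) (φ : Formula n) : Prop :=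
  ∃ (W : Type) (M : KModel n W) (s : W), IsModel L M ∧ Sat M s φ

/-- Collective `p`-bisimulation between two pointed models. -/
def CollPBisim {n : ℕ} {W W' : Type} (M : KModel n W) (s : W) (M' : KModel n W') (s' : W')
    (p : ℕ) : Prop :=
  ∃ ρ : W → W' → Prop, ρ s s' ∧
    ∀ u u', ρ u u' →
      ((∀ q : ℕ, q ≠ p → (q ∈ M.V u ↔ q ∈ M'.V u')) ∧
       (∀ B : Finset (Fin n), B.Nonempty → ∀ v, M.RB B u v → ∃ v', M'.RB B u' v' ∧ ρ v v') ∧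
       (∀ B : Finset (Fin n), B.Nonempty → ∀ v', M'.RB B u' v' → ∃ v, M.RB B u v ∧ ρ v v'))

/-- `ψ` is a result of forgetting `p` in `φ` in system `L`
(written `dforget_L(φ,p) ≡_L ψ` in the paper). -/
def IsForget {n : ℕ} (L : MSys) (φ : Formula n) (p : ℕ) (ψ : Formula n) : Prop :=
  ψ.atoms ⊆ φ.atoms.erase p ∧
  (∀ (W W' : Type) (M : KModel n W) (M' : KModel n W') (s : W) (s' : W'),
      IsModel L M → IsModel L M' → Sat M s φ → CollPBisim M s M' s' p → Sat M' s' ψ) ∧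
  (∀ (W' : Type) (M' : KModel n W') (s' : W'),
      IsModel L M' → Sat M' s' ψ →
      ∃ (W : Type) (M : KModel n W) (s : W), IsModel L M ∧ Sat M s φ ∧ CollPBisim M s M' s' p)

/-- `L` is closed under forgetting: `dforget_L(φ,p)` exists (as an `L`-satisfiable formula)
for every `L`-satisfiable `φ` and every atom `p`. -/
def ClosedUnderForgetting {n : ℕ} (L : MSys) : Prop :=
  ∀ (φ : Formula n) (p : ℕ), SatL L φ → ∃ ψ : Formula n, SatL L ψ ∧ IsForget L φ p ψ

/-- `ψ` is a uniform interpolant of `φ` in `L` over `P \ {p}`. -/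
def IsUI {n : ℕ} (L : MSys) (P : Finset ℕ) (p : ℕ) (φ ψ : Formula n) : Prop :=
  SatL L ψ ∧ ψ.atoms ⊆ P.erase p ∧
  ∀ χ : Formula n, p ∉ χ.atoms → (Entails L φ χ ↔ Entails L ψ χ)

/-- The uniform interpolation property for the system `L`. -/
def HasUIP {n : ℕ} (L : MSys) : Prop :=
  ∀ (P : Finset ℕ) (p : ℕ) (φ : Formula n),
    p ∈ P → φ.atoms ⊆ P → SatL L φ → ∃ ψ : Formula n, IsUI L P p φ ψ

/-! ### Canonical formulas -/

/-- Big conjunction of a list of formulas (`⊤` for the empty list). -/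
def bigAnd {n : ℕ} : List (Formula n) → Formula n
  | [] => .top
  | φ :: l => .and φ (bigAnd l)

/-- Big disjunction of a list of formulas (`⊥` for the empty list). -/
def bigOr {n : ℕ} : List (Formula n) → Formula n
  | [] => .bot
  | φ :: l => .or φ (bigOr l)

/-- An injective numerical code of formulas, used to fix a canonical ordering. -/
def fcode {n : ℕ} : Formula n → ℕ
  | .top => Nat.pair 0 0
  | .bot => Nat.pair 1 0
  | .atom q => Nat.pair 2 q
  | .neg φ => Nat.pair 3 (fcode φ)
  | .and φ ψ => Nat.pair 4 (Nat.pair (fcode φ) (fcode ψ))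
  | .or φ ψ => Nat.pair 5 (Nat.pair (fcode φ) (fcode ψ))
  | .D B φ => Nat.pair 6 (Nat.pair (B.1.sum fun i => 2 ^ (i : ℕ)) (fcode φ))

/-- Insert a formula into a strictly `fcode`-sorted list (dropping duplicates). -/
def insertF {n : ℕ} (φ : Formula n) : List (Formula n) → List (Formula n)
  | [] => [φ]
  | ψ :: l =>
      if fcode φ < fcode ψ then φ :: ψ :: l
      else if fcode φ = fcode ψ then ψ :: l
      else ψ :: insertF φ l

/-- The canonical (sorted, duplicate-free) list representing the set of formulas in `l`. -/
def normList {n : ℕ} (l : List (Formula n)) : List (Formula n) := l.foldr insertF []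

/-- The minterm of `P` that is positive exactly on `S`. -/
def minterm {n : ℕ} (P S : Finset ℕ) : Formula n :=
  bigAnd ((P.sort (· ≤ ·)).map fun q =>
    if q ∈ S then Formula.atom q else Formula.neg (Formula.atom q))

/-- The subset of `Fin n` whose characteristic bits are those of `m`. -/
def natToFinset (n m : ℕ) : Finset (Fin n) :=
  Finset.univ.filter fun i => m.testBit (i : ℕ)

/-- A canonical enumeration of all nonempty subsets of the agent set. -/
def neSubsets (n : ℕ) : List {B : Finset (Fin n) // B.Nonempty} :=
  ((List.range (2 ^ n)).map (natToFinset n)).filterMap fun B =>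
    if h : B.Nonempty then some ⟨B, h⟩ else none

/-- `∇_B Φ = D_B (⋁Φ) ∧ ⋀_{φ ∈ Φ} ¬ D_B ¬ φ`. -/
def nabla {n : ℕ} (B : {B : Finset (Fin n) // B.Nonempty}) (Φ : List (Formula n)) : Formula n :=
  Formula.and (Formula.D B (bigOr Φ))
    (bigAnd (Φ.map fun φ => Formula.neg (Formula.D B (Formula.neg φ))))

/-- Underlying data of a d-canonical formula: a set of (positive) atoms together with,
for every set `B` of agents, a list of successor data. -/
inductive CData (n : ℕ) : Type
  | mk (S : Finset ℕ) (succ : Finset (Fin n) → List (CData n)) : CData n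

/-- The positive-atom component. -/
def CData.S {n : ℕ} : CData n → Finset ℕ
  | mk S _ => S

/-- The `B`-successor data. -/
def CData.succ {n : ℕ} : CData n → Finset (Fin n) → List (CData n)
  | mk _ f => f

/-- The d-canonical formula of depth `k` over `P` determined by the data `d`:
`δ_0 ∧ ⋀_{B} ∇_B Φ_B`. -/
def toFormula {n : ℕ} (P : Finset ℕ) : ℕ → CData n → Formula n
  | 0, d => minterm P (d.S ∩ P)
  | (k+1), d =>
      Formula.and (minterm P (d.S ∩ P))
        (bigAnd ((neSubsets n).map fun B =>
          nabla B (normList ((d.succ B.1).map fun c => toFormula P k c))))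

/-- `D^P_k`: the set of d-canonical formulas of depth `k` over `P`. -/
def DP {n : ℕ} (P : Finset ℕ) (k : ℕ) : Set (Formula n) := Set.range (toFormula P k)

/-- `R_B(δ)` for `δ` the level-`k` canonical formula with data `d`:
the set of `B`-successor canonical formulas (of level `k - 1`). -/
def RBset {n : ℕ} (P : Finset ℕ) (k : ℕ) (d : CData n) (B : Finset (Fin n)) :
    Set (Formula n) :=
  {φ | ∃ c ∈ d.succ B, φ = toFormula P (k - 1) c}

/-- One pruning step `δ ↦ δ^↓` on data (first argument: the level of the input). -/
def downD {n : ℕ} : ℕ → CData n → CData n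
  | 0, d => d
  | 1, d => CData.mk d.S (fun _ => [])
  | (k+2), d => CData.mk d.S (fun B => (d.succ B).map fun c => downD (k+1) c)

/-- `l`-fold pruning `δ ↦ δ^{↓l}` on data (first argument: the level of the input). -/
def downIter {n : ℕ} : ℕ → ℕ → CData n → CData n
  | _, 0, d => d
  | k, (l+1), d => downIter (k-1) l (downD k d)

/-- Truncation `δ ↦ δ^{↑l}` on data (first argument: the level of the input). -/
def upD {n : ℕ} : ℕ → ℕ → CData n → CData n
  | _, 0, d => CData.mk d.S (fun _ => [])
  | 0, (_+1), d => d
  | (k+1), (l+1), d => CData.mk d.S (fun B => (d.succ B).map fun c => upD k l c)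

/-- The canonical formula `δ` of level `k` with data `d`. -/
def cf {n : ℕ} (P : Finset ℕ) (k : ℕ) (d : CData n) : Formula n := toFormula P k d

/-- `δ^{↓l}` (a canonical formula of level `k - l`). -/
def cfDown {n : ℕ} (P : Finset ℕ) (k l : ℕ) (d : CData n) : Formula n :=
  toFormula P (k - l) (downIter k l d)

/-- `δ^{↑l}` (a canonical formula of level `min k l`). -/
def cfUp {n : ℕ} (P : Finset ℕ) (k l : ℕ) (d : CData n) : Formula n :=
  toFormula P (min k l) (upD k l d)

/-- Literal elimination: `φ^p` replaces every occurrence of `¬p` by `⊤` and subsequently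
every remaining occurrence of `p` by `⊤`. -/
def elim {n : ℕ} (p : ℕ) : Formula n → Formula n
  | .top => .top
  | .bot => .bot
  | .atom q => if q = p then .top else .atom q
  | .neg (.atom q) => if q = p then .top else .neg (.atom q)
  | .neg φ => .neg (elim p φ)
  | .and φ ψ => .and (elim p φ) (elim p ψ)
  | .or φ ψ => .or (elim p φ) (elim p ψ)
  | .D B φ => .D B (elim p φ)

/-!
The model is an unravelling of `M'` along the canonical data of `δ`. A node is a world `u` of `M'`
tagged with data `c` of some level `j` such that `u ⊨ (δ_c)^p` and `δ_c` is `T_nD`-satisfiable; it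
takes `p` from `c` and every other atom from `u`. Each `B`-successor `v` of `u` that realizes
`(δ_e)^p` for some `e ∈ R_B(δ_c)` becomes a child reached by the agents of `B`, and level-`0`
nodes are plain copies of `M'`; projecting nodes to `M'` is then a collective `p`-bisimulation.

Because the relations must be reflexive, a node is its own successor, so it cannot be expected to
satisfy exactly its own `δ_c` at every level. Instead a node of level `k` satisfies every canonical
formula of depth `j ≤ k` entailed by `δ_c`. This works since the depth-`k` canonical formula true
at a world determines the depth-`j` ones, so a single reflexive model of `δ_c` decides which
successor formula each node (itself included) must realize.
-/

section Encoding

variable {n : ℕ}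

lemma sum_two_pow_fin_eq_sum_map (B : Finset (Fin n)) :
    ∑ i ∈ B, 2 ^ (i : ℕ) = ∑ j ∈ B.map Fin.valEmbedding, 2 ^ j :=
  (Finset.sum_map B Fin.valEmbedding _).symm

lemma natToFinset_sum_two_pow (B : Finset (Fin n)) :
    natToFinset n (∑ i ∈ B, 2 ^ (i : ℕ)) = B := by
  ext i
  rw [natToFinset, Finset.mem_filter, sum_two_pow_fin_eq_sum_map, ← Nat.mem_bitIndices,
    ← List.mem_toFinset, Finset.toFinset_bitIndices_sum_two_pow]
  simp [Fin.val_inj]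

lemma mem_neSubsets (B : {B : Finset (Fin n) // B.Nonempty}) : B ∈ neSubsets n := by
  refine List.mem_filterMap.mpr ⟨B.1, List.mem_map.mpr ⟨∑ i ∈ B.1, 2 ^ (i : ℕ), ?_,
    natToFinset_sum_two_pow B.1⟩, dif_pos B.2⟩
  rw [List.mem_range, sum_two_pow_fin_eq_sum_map]
  exact Nat.geomSum_lt le_rfl (by simp)

lemma fcode_injective : Function.Injective (fcode (n := n)) := by
  intro φ ψ h
  induction φ generalizing ψ <;> cases ψ <;>
    simp only [fcode, Nat.pair_eq_pair, Nat.reduceEqDiff, OfNat.ofNat_ne_zero, OfNat.ofNat_ne_one,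
      Nat.succ_ne_self, false_and, true_and, Formula.atom.injEq, Formula.neg.injEq,
      Formula.and.injEq, Formula.or.injEq, Formula.D.injEq] at h ⊢
  case atom.atom => exact h
  case neg.neg _ ih _ => exact ih h
  case and.and _ _ ih ih' _ _ => exact ⟨ih h.1, ih' h.2⟩
  case or.or _ _ ih ih' _ _ => exact ⟨ih h.1, ih' h.2⟩
  case D.D B _ ih _ _ =>
    refine ⟨Subtype.ext ?_, ih h.2⟩
    rw [← natToFinset_sum_two_pow B.1, h.1, natToFinset_sum_two_pow]

lemma mem_insertF {φ ψ : Formula n} {l : List (Formula n)} :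
    ψ ∈ insertF φ l ↔ ψ = φ ∨ ψ ∈ l := by
  induction l with
  | nil => simp [insertF]
  | cons a l ih =>
    unfold insertF
    split_ifs with hlt heq
    · simp
    · rw [fcode_injective heq]; simp
    · simp [ih, or_left_comm]

lemma mem_normList {φ : Formula n} {l : List (Formula n)} : φ ∈ normList l ↔ φ ∈ l := by
  induction l with
  | nil => simp [normList]
  | cons a l ih => simp [normList, mem_insertF, ← ih]

end Encoding

section LiteralElimination

variable {n : ℕ}

lemma elim_bigAnd (p : ℕ) (l : List (Formula n)) :
    elim p (bigAnd l) = bigAnd (l.map (elim p)) := by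
  induction l with
  | nil => rfl
  | cons a l ih => simp [bigAnd, elim, ih]

lemma elim_bigOr (p : ℕ) (l : List (Formula n)) :
    elim p (bigOr l) = bigOr (l.map (elim p)) := by
  induction l with
  | nil => rfl
  | cons a l ih => simp [bigOr, elim, ih]

lemma elim_neg_of_ne_atom {p : ℕ} {φ : Formula n} (h : ∀ q, φ ≠ .atom q) :
    elim p φ.neg = (elim p φ).neg := by
  cases φ <;> first | rfl | exact absurd rfl (h _)

lemma toFormula_ne_atom (P : Finset ℕ) (k : ℕ) (c : CData n) (q : ℕ) :
    toFormula P k c ≠ .atom q := by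
  cases k with
  | zero =>
    simp only [toFormula, minterm]
    generalize List.map _ _ = l
    cases l <;> simp [bigAnd]
  | succ k => simp [toFormula]

lemma elim_nabla (p : ℕ) (B : {B : Finset (Fin n) // B.Nonempty}) {Φ : List (Formula n)}
    (hΦ : ∀ φ ∈ Φ, ∀ q, φ ≠ .atom q) : elim p (nabla B Φ) = nabla B (Φ.map (elim p)) := by
  simp only [nabla, elim, elim_bigAnd, elim_bigOr, List.map_map]
  congr 2
  exact List.map_congr_left fun φ hφ => by simp [elim, elim_neg_of_ne_atom (hΦ φ hφ)]

lemma elim_toFormula_succ (p : ℕ) (P : Finset ℕ) (k : ℕ) (c : CData n) :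
    elim p (toFormula P (k + 1) c) = (elim p (minterm P (c.S ∩ P))).and (bigAnd ((neSubsets n).map
      fun B => nabla B ((normList ((c.succ B.1).map (toFormula P k))).map (elim p)))) := by
  simp only [toFormula, elim, elim_bigAnd, List.map_map]
  refine congrArg _ (congrArg bigAnd (List.map_congr_left fun B _ => elim_nabla p B ?_))
  simp [mem_normList, toFormula_ne_atom]

end LiteralElimination

section Semantics

variable {n : ℕ} {W : Type} (M : KModel n W)

lemma sat_bigAnd {s : W} {l : List (Formula n)} : Sat M s (bigAnd l) ↔ ∀ φ ∈ l, Sat M s φ := by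
  induction l with
  | nil => simp [bigAnd, Sat]
  | cons a l ih => simp [bigAnd, Sat, ih]

lemma sat_bigOr {s : W} {l : List (Formula n)} : Sat M s (bigOr l) ↔ ∃ φ ∈ l, Sat M s φ := by
  induction l with
  | nil => simp [bigOr, Sat]
  | cons a l ih => simp [bigOr, Sat, ih]

lemma sat_nabla {s : W} {B : {B : Finset (Fin n) // B.Nonempty}} {Φ : List (Formula n)} :
    Sat M s (nabla B Φ) ↔
      (∀ t, M.RB B.1 s t → ∃ φ ∈ Φ, Sat M t φ) ∧ ∀ φ ∈ Φ, ∃ t, M.RB B.1 s t ∧ Sat M t φ := by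
  simp [nabla, Sat, sat_bigAnd, sat_bigOr]

lemma sat_bigAnd_neSubsets {s : W} {F : {B : Finset (Fin n) // B.Nonempty} → Formula n} :
    Sat M s (bigAnd ((neSubsets n).map F)) ↔ ∀ B hB, Sat M s (F ⟨B, hB⟩) := by
  rw [sat_bigAnd, List.forall_mem_map]
  exact ⟨fun h B hB => h _ (mem_neSubsets _), fun h B _ => h B.1 B.2⟩

lemma sat_minterm {s : W} {P A : Finset ℕ} :
    Sat M s (minterm P A) ↔ ∀ q ∈ P, (q ∈ M.V s ↔ q ∈ A) := by
  simp only [minterm, sat_bigAnd, List.forall_mem_map, Finset.mem_sort]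
  refine forall₂_congr fun q _ => ?_
  split_ifs <;> simp [Sat, *]

lemma sat_elim_minterm {s : W} {p : ℕ} {P A : Finset ℕ} :
    Sat M s (elim p (minterm P A)) ↔ ∀ q ∈ P, q ≠ p → (q ∈ M.V s ↔ q ∈ A) := by
  simp only [minterm, elim_bigAnd, sat_bigAnd, List.forall_mem_map, Finset.mem_sort]
  refine forall₂_congr fun q _ => ?_
  by_cases hq : q = p <;> split_ifs <;> simp [elim, Sat, *]

lemma sat_toFormula_succ {s : W} {P : Finset ℕ} {k : ℕ} {c : CData n} :
    Sat M s (toFormula P (k + 1) c) ↔ Sat M s (minterm P (c.S ∩ P)) ∧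
      ∀ B, B.Nonempty → (∀ t, M.RB B s t → ∃ e ∈ c.succ B, Sat M t (toFormula P k e)) ∧
        ∀ e ∈ c.succ B, ∃ t, M.RB B s t ∧ Sat M t (toFormula P k e) := by
  simp [toFormula, Sat, sat_bigAnd_neSubsets, sat_nabla, mem_normList]

lemma sat_elim_toFormula_succ {s : W} {p : ℕ} {P : Finset ℕ} {k : ℕ} {c : CData n} :
    Sat M s (elim p (toFormula P (k + 1) c)) ↔ Sat M s (elim p (minterm P (c.S ∩ P))) ∧
      ∀ B, B.Nonempty → (∀ t, M.RB B s t → ∃ e ∈ c.succ B, Sat M t (elim p (toFormula P k e))) ∧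
        ∀ e ∈ c.succ B, ∃ t, M.RB B s t ∧ Sat M t (elim p (toFormula P k e)) := by
  rw [elim_toFormula_succ]
  simp [Sat, sat_bigAnd_neSubsets, sat_nabla, mem_normList]

end Semantics

section Determination

variable {n : ℕ} {P : Finset ℕ}

lemma sat_minterm_of_sat_toFormula {W : Type} {M : KModel n W} {s : W} {k : ℕ} {c : CData n}
    (h : Sat M s (toFormula P k c)) : Sat M s (minterm P (c.S ∩ P)) := by
  cases k with
  | zero => exact h
  | succ k => exact ((sat_toFormula_succ M).mp h).1

lemma sat_elim_minterm_of_sat_elim_toFormula {W : Type} {M : KModel n W} {s : W} {p k : ℕ}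
    {c : CData n} (h : Sat M s (elim p (toFormula P k c))) :
    Sat M s (elim p (minterm P (c.S ∩ P))) := by
  cases k with
  | zero => exact h
  | succ k => exact ((sat_elim_toFormula_succ M).mp h).1

lemma sat_minterm_transfer {W W' : Type} {M : KModel n W} {N : KModel n W'} {s : W} {t : W'}
    {A A' : Finset ℕ} (hsA : Sat M s (minterm P A)) (hsA' : Sat M s (minterm P A'))
    (htA : Sat N t (minterm P A)) : Sat N t (minterm P A') := by
  rw [sat_minterm] at *
  exact fun q hq => (htA q hq).trans ((hsA q hq).symm.trans (hsA' q hq))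

theorem sat_toFormula_transfer_of_le {W W' : Type} {M : KModel n W} {N : KModel n W'} :
    ∀ {j k : ℕ} {c f : CData n} {s : W} {t : W'}, j ≤ k →
      Sat M s (toFormula P k c) → Sat M s (toFormula P j f) →
      Sat N t (toFormula P k c) → Sat N t (toFormula P j f) := by
  intro j
  induction j with
  | zero =>
    intro k c f s t _ hsc hsf htc
    exact sat_minterm_transfer (sat_minterm_of_sat_toFormula hsc) hsf
      (sat_minterm_of_sat_toFormula htc)
  | succ j ih =>
    intro k c f s t hjk hsc hsf htc
    obtain ⟨m, rfl⟩ : ∃ m, k = m + 1 := ⟨k - 1, by omega⟩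
    rw [sat_toFormula_succ] at hsc hsf htc ⊢
    refine ⟨sat_minterm_transfer hsc.1 hsf.1 htc.1, fun B hB => ⟨fun t' ht' => ?_, fun g hg => ?_⟩⟩
    · obtain ⟨e, he, ht'e⟩ := (htc.2 B hB).1 t' ht'
      obtain ⟨s', hs', hs'e⟩ := (hsc.2 B hB).2 e he
      obtain ⟨g, hg, hs'g⟩ := (hsf.2 B hB).1 s' hs'
      exact ⟨g, hg, ih (by omega) hs'e hs'g ht'e⟩
    · obtain ⟨s', hs', hs'g⟩ := (hsf.2 B hB).2 g hg
      obtain ⟨e, he, hs'e⟩ := (hsc.2 B hB).1 s' hs'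
      obtain ⟨t', ht', ht'e⟩ := (htc.2 B hB).2 e he
      exact ⟨t', ht', ih (by omega) hs'e hs'g ht'e⟩

lemma entails_toFormula_of_sat {L : MSys} {W : Type} {M : KModel n W} {s : W} {j k : ℕ}
    {c f : CData n} (hjk : j ≤ k) (hc : Sat M s (toFormula P k c))
    (hf : Sat M s (toFormula P j f)) : Entails L (toFormula P k c) (toFormula P j f) :=
  fun _ _ _ _ ht => sat_toFormula_transfer_of_le hjk hc hf ht

end Determination

lemma Entails.trans {n : ℕ} {L : MSys} {φ ψ χ : Formula n} (h₁ : Entails L φ ψ)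
    (h₂ : Entails L ψ χ) : Entails L φ χ :=
  fun W M hM s hs => h₂ W M hM s (h₁ W M hM s hs)

structure Node (n : ℕ) (W' : Type) where
  pt : W'
  data : CData n
  label : Finset (Fin n)
  level : ℕ

section Unravelling

variable {n : ℕ} (P : Finset ℕ) (p : ℕ) {W' : Type} (M' : KModel n W')

def Node.Valid (x : Node n W') : Prop :=
  Sat M' x.pt (elim p (toFormula P x.level x.data)) ∧ SatL MSys.T (toFormula P x.level x.data)

/-- A child created along `R_B` is also an `R_{B'}`-successor for every `B' ⊆ B`, so it has to be
compatible with some element of `R_{B'}(δ_c)` as well. -/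
def Node.IsChild (x y : Node n W') : Prop :=
  x.level = y.level + 1 ∧ y.Valid P p M' ∧
    ∀ B : Finset (Fin n), B.Nonempty → B ⊆ y.label →
      ∃ e ∈ x.data.succ B, Entails MSys.T (toFormula P y.level y.data) (toFormula P y.level e)

def unravel : KModel n (Node n W') where
  R i x y := x = y ∨
    i ∈ y.label ∧ M'.R i x.pt y.pt ∧ (x.IsChild P p M' y ∨ x.level = 0 ∧ y.level = 0)
  V x := {q | if q = p then p ∈ x.data.S else q ∈ M'.V x.pt}

lemma unravel_isModel : IsModel MSys.T (unravel P p M') := fun _ _ => Or.inl rfl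

variable {P p M'}

lemma unravel_RB {B : Finset (Fin n)} (hB : B.Nonempty) {x y : Node n W'} :
    (unravel P p M').RB B x y ↔ x = y ∨
      B ⊆ y.label ∧ M'.RB B x.pt y.pt ∧ (x.IsChild P p M' y ∨ x.level = 0 ∧ y.level = 0) := by
  by_cases hxy : x = y
  · simp [hxy, KModel.RB, unravel]
  obtain ⟨i₀, hi₀⟩ := hB
  simp only [KModel.RB, unravel, hxy, false_or]
  exact ⟨fun h => ⟨fun i hi => (h i hi).1, fun i hi => (h i hi).2.1, (h i₀ hi₀).2.2⟩,
    fun ⟨hl, hR, hstep⟩ i hi => ⟨hl hi, hR i hi, hstep⟩⟩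

lemma sat_unravel_minterm {x : Node n W'}
    (h : Sat M' x.pt (elim p (minterm P (x.data.S ∩ P)))) :
    Sat (unravel P p M') x (minterm P (x.data.S ∩ P)) := by
  rw [sat_elim_minterm] at h
  rw [sat_minterm]
  intro q hq
  show (if q = p then p ∈ x.data.S else q ∈ M'.V x.pt) ↔ _
  split_ifs with hqp
  · subst hqp; simp [hq]
  · exact h q hq hqp

lemma sat_unravel_minterm_of_entails {x : Node n W'} {j : ℕ} {f : CData n} (hx : x.Valid P p M')
    (hf : Entails MSys.T (toFormula P x.level x.data) (toFormula P j f)) :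
    Sat (unravel P p M') x (minterm P (f.S ∩ P)) := by
  obtain ⟨N, MN, s₁, hMN, hs₁⟩ := hx.2
  exact sat_minterm_transfer (sat_minterm_of_sat_toFormula hs₁)
    (sat_minterm_of_sat_toFormula (hf _ _ hMN _ hs₁))
    (sat_unravel_minterm (sat_elim_minterm_of_sat_elim_toFormula hx.1))

lemma unravel_RB_child {x : Node n W'} {m : ℕ} (hx : x.Valid P p M') (hm : x.level = m + 1)
    {B : Finset (Fin n)} (hB : B.Nonempty) {e : CData n} (he : e ∈ x.data.succ B) {v : W'}
    (hv : M'.RB B x.pt v) (hve : Sat M' v (elim p (toFormula P m e))) :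
    (unravel P p M').RB B x ⟨v, e, B, m⟩ ∧ Node.Valid P p M' ⟨v, e, B, m⟩ := by
  obtain ⟨N, MN, s₁, hMN, hs₁⟩ := hx.2
  rw [hm, sat_toFormula_succ] at hs₁
  obtain ⟨t₀, ht₀, ht₀e⟩ := (hs₁.2 B hB).2 e he
  have hvalid : Node.Valid P p M' ⟨v, e, B, m⟩ := ⟨hve, N, MN, t₀, hMN, ht₀e⟩
  refine ⟨(unravel_RB hB).mpr (Or.inr ⟨subset_rfl, hv, Or.inl ⟨hm, hvalid, ?_⟩⟩), hvalid⟩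
  intro B' hB' hB'B
  obtain ⟨e', he', ht₀e'⟩ := (hs₁.2 B' hB').1 t₀ fun i hi => ht₀ i (hB'B hi)
  exact ⟨e', he', entails_toFormula_of_sat le_rfl ht₀e ht₀e'⟩

theorem sat_unravel_of_entails :
    ∀ (j : ℕ) (x : Node n W') (f : CData n), x.Valid P p M' → j ≤ x.level →
      Entails MSys.T (toFormula P x.level x.data) (toFormula P j f) →
      Sat (unravel P p M') x (toFormula P j f) := by
  intro j
  induction j with
  | zero => exact fun x f hx _ hf => sat_unravel_minterm_of_entails hx hf
  | succ j ih =>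
    intro x f hx hj hf
    obtain ⟨m, hm⟩ : ∃ m, x.level = m + 1 := ⟨x.level - 1, by omega⟩
    obtain ⟨N, MN, s₁, hMN, hs₁⟩ := hx.2
    have hs₁f := (sat_toFormula_succ MN).mp (hf _ _ hMN _ hs₁)
    have hs₁c := (sat_toFormula_succ MN).mp (hm ▸ hs₁)
    rw [sat_toFormula_succ]
    refine ⟨sat_unravel_minterm_of_entails hx hf, fun B hB => ⟨fun y hy => ?_, fun g hg => ?_⟩⟩
    · rcases (unravel_RB hB).mp hy with rfl | ⟨hsub, -, ⟨hlev, hy, hcompat⟩ | ⟨h0, -⟩⟩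
      · obtain ⟨g, hg, hs₁g⟩ := (hs₁f.2 B hB).1 s₁ fun i _ => hMN i s₁
        exact ⟨g, hg, ih x g hx (by omega) (entails_toFormula_of_sat (by omega) hs₁ hs₁g)⟩
      · have hym : y.level = m := by omega
        obtain ⟨e, he, hye⟩ := hcompat B hB hsub
        obtain ⟨t₀, ht₀, ht₀e⟩ := (hs₁c.2 B hB).2 e he
        obtain ⟨g, hg, ht₀g⟩ := (hs₁f.2 B hB).1 t₀ ht₀
        refine ⟨g, hg, ih y g hy (by omega) (hye.trans ?_)⟩
        exact entails_toFormula_of_sat (by omega) (hym ▸ ht₀e) ht₀g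
      · omega
    · obtain ⟨t₀, ht₀, ht₀g⟩ := (hs₁f.2 B hB).2 g hg
      obtain ⟨e, he, ht₀e⟩ := (hs₁c.2 B hB).1 t₀ ht₀
      obtain ⟨v, hv, hve⟩ := (((sat_elim_toFormula_succ M').mp (hm ▸ hx.1)).2 B hB).2 e he
      obtain ⟨hR, hvalid⟩ := unravel_RB_child hx hm hB he hv hve
      have hjm : j ≤ m := by omega
      exact ⟨_, hR, ih _ g hvalid hjm (entails_toFormula_of_sat hjm ht₀e ht₀g)⟩

lemma unravel_collPBisim (hM' : IsModel MSys.T M') {x : Node n W'} (hx : x.Valid P p M') :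
    CollPBisim (unravel P p M') x M' x.pt p := by
  refine ⟨fun y u => y.pt = u ∧ (y.level = 0 ∨ y.Valid P p M'), ⟨rfl, Or.inr hx⟩, ?_⟩
  rintro y _ ⟨rfl, hy⟩
  refine ⟨fun q hq => by simp [unravel, hq], fun B hB z hz => ?_, fun B hB v hv => ?_⟩
  · rcases (unravel_RB hB).mp hz with rfl | ⟨-, hv, hchild | ⟨-, h0⟩⟩
    · exact ⟨y.pt, fun i _ => hM' i y.pt, rfl, hy⟩
    · exact ⟨z.pt, hv, rfl, Or.inr hchild.2.1⟩
    · exact ⟨z.pt, hv, rfl, Or.inl h0⟩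
  · cases hlev : y.level with
    | zero =>
      refine ⟨⟨v, y.data, Finset.univ, 0⟩, (unravel_RB hB).mpr (Or.inr ?_), rfl, Or.inl rfl⟩
      exact ⟨Finset.subset_univ B, hv, Or.inr ⟨hlev, rfl⟩⟩
    | succ m =>
      have hy : y.Valid P p M' := hy.resolve_left (by omega)
      obtain ⟨e, he, hve⟩ := (((sat_elim_toFormula_succ M').mp (hlev ▸ hy.1)).2 B hB).1 v hv
      obtain ⟨hR, hvalid⟩ := unravel_RB_child hy hlev hB he hv hve
      exact ⟨_, hR, rfl, Or.inr hvalid⟩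

end Unravelling

theorem construction_T_general {n : ℕ} (P : Finset ℕ) (p : ℕ) (k : ℕ)
    (d : CData n) (hδ : SatL MSys.T (cf P k d))
    (W' : Type) (M' : KModel n W') (s' : W') (hM' : IsModel MSys.T M')
    (hs' : Sat M' s' (elim p (cf P k d))) :
    ∃ (W : Type) (M : KModel n W) (s : W),
      IsModel MSys.T M ∧ Sat M s (cf P k d) ∧ CollPBisim M s M' s' p := by
  let root : Node n W' := ⟨s', d, ∅, k⟩
  have hroot : root.Valid P p M' := ⟨hs', hδ⟩
  exact ⟨Node n W', unravel P p M', root, unravel_isModel P p M',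
    sat_unravel_of_entails k root d hroot le_rfl fun _ _ _ _ h => h,
    unravel_collPBisim hM' hroot⟩

/-- model construction for `T_n D`. -/
theorem construction_T {n : ℕ} (P : Finset ℕ) (p : ℕ) (hp : p ∈ P) (k : ℕ)
    (d : CData n) (hδ : SatL MSys.T (cf P k d))
    (W' : Type) (M' : KModel n W') (s' : W') (hM' : IsModel MSys.T M')
    (hs' : Sat M' s' (elim p (cf P k d))) :
    ∃ (W : Type) (M : KModel n W) (s : W),
      IsModel MSys.T M ∧ Sat M s (cf P k d) ∧ CollPBisim M s M' s' p :=
  construction_T_general P p k d hδ W' M' s' hM' hs'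

end DKLogic
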